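/- Let (A, I) be a transversal prism and r ≥ 1. The map A/I_r → A/I_r ×_{A/(I_r + (φ^r)(I))} A/(φ^r)(I) given by x ↦ (x^p, φ(x)) is well-defined (i.e., x^p and φ(x) have equal images in A/(I_r + (φ^r)(I))) and multiplicative, hence induces a multiplicative map N_r : A/I_r → A/I_{r+1} via the identification A/I_{r+1} ≅ A/I_r ×_{A/(I_r+(φ^r)(I))} A/(φ^r)(I). In particular N_r restricts to a group homomorphism on unit groups (A/I_r)^× → (A/I_{r+1})^×. -/

import Mathlib

/-!
Write `I = (d)` and `D k = φ^k d`, so that `I_r = (D 0 ⋯ D (r-1))` and `φ^r(I) = (D r)`.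
Since `φ(I_r) ⊆ φ^r(I)`, the pair `(x^p, φ x)` depends only on `x` modulo `I_r`, and its entries
agree modulo `I_r + φ^r(I)` since `x^p - φ x = -p δ x` and `p ∈ I_r + φ^r(I)`. The latter follows
by induction on `r` from `δ d` being a unit, which is where `p ∈ I + φ(I)` enters.

The comparison map `A ⧸ I_r φ^r(I) → A ⧸ I_r × A ⧸ φ^r(I)` is injective, with image the fibre
product, once `I_r ∩ φ^r(I) = I_r φ^r(I)`, i.e. once `D 0 ⋯ D (r-1)` is a nonzerodivisor
modulo `D r`. Transversality and completeness make `d, p`, hence `D k, p` (as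
`D (k+1) ≡ D k ^ p mod p`), hence `p, D k` regular sequences. For `k < r` we have
`D r = D k ^ p^(r-k) + p · unit`, so modulo `D r` a power of `D k` is a unit multiple of the
nonzerodivisor `p`.
-/

/-- The `n`-fold composite of a ring endomorphism. -/
def iterHom {A : Type*} [CommRing A] (φ : A →+* A) : ℕ → (A →+* A)
  | 0 => RingHom.id A
  | n + 1 => φ.comp (iterHom φ n)

/-- `prIdeal φ I r = I · φ(I) ⋯ φ^(r-1)(I)` (the ideal `I_r`), with `prIdeal φ I 0 = (1)`. -/
def prIdeal {A : Type*} [CommRing A] (φ : A →+* A) (I : Ideal A) : ℕ → Ideal A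
  | 0 => ⊤
  | n + 1 => prIdeal φ I n * I.map (iterHom φ n)

open Ideal Finset
open Ideal.Quotient (mk mk_surjective eq_zero_iff_mem)

section CommRing

variable {A : Type*} [CommRing A]

theorem isUnit_add_of_mem_jacobson {u j : A} (hu : IsUnit u)
    (hj : j ∈ (⊥ : Ideal A).jacobson) : IsUnit (u + j) := by
  obtain ⟨v, hv⟩ := hu.exists_right_inv
  rw [show u + j = (j * v + 1) * u by linear_combination (-j) * hv]
  exact (mem_jacobson_bot.1 hj v).mul hu

theorem IsHausdorff.eq_zero_of_forall_pow_dvd {J : Ideal A} (hJ : IsHausdorff J A) {a x : A}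
    (ha : a ∈ J) (h : ∀ n, a ^ n ∣ x) : x = 0 :=
  hJ.haus x fun n => by
    obtain ⟨y, hy⟩ := h n
    rw [SModEq.zero, hy, ← smul_eq_mul]
    exact Submodule.smul_mem_smul (pow_mem_pow ha n) Submodule.mem_top

/-- `b` is a nonzerodivisor on `A ⧸ (a)`. -/
def IsRegularMod (a b : A) : Prop := ∀ x, a ∣ b * x → a ∣ x

theorem isRegularMod_of_quotient {a b : A}
    (h : ∀ x : A ⧸ span {a}, mk _ b * x = 0 → x = 0) : IsRegularMod a b := by
  intro x hx
  have := h (mk _ x) (by rwa [← map_mul, eq_zero_iff_mem, mem_span_singleton])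
  rwa [eq_zero_iff_mem, mem_span_singleton] at this

namespace IsRegularMod

variable {a b c : A}

theorem one : IsRegularMod a (1 : A) := fun x h => by rwa [one_mul] at h

theorem mul (hb : IsRegularMod a b) (hc : IsRegularMod a c) : IsRegularMod a (b * c) :=
  fun x h => hc x (hb _ (by rwa [mul_assoc] at h))

theorem pow (hb : IsRegularMod a b) (n : ℕ) : IsRegularMod a (b ^ n) := by
  induction n with
  | zero => rw [pow_zero]; exact one
  | succ n ih => rw [pow_succ]; exact ih.mul hb

theorem prod {ι : Type*} {s : Finset ι} {f : ι → A} (h : ∀ i ∈ s, IsRegularMod a (f i)) :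
    IsRegularMod a (∏ i ∈ s, f i) :=
  Finset.prod_induction f _ (fun _ _ => mul) one h

theorem of_dvd_sub (hb : IsRegularMod a b) (h : a ∣ c - b) : IsRegularMod a c := fun x hx =>
  hb x (by simpa only [sub_mul, sub_sub_cancel] using dvd_sub hx (h.mul_right x))

theorem symm (ha : a ∈ nonZeroDivisors A) (hb : IsRegularMod a b) : IsRegularMod b a := by
  rintro x ⟨z, hz⟩
  obtain ⟨w, rfl⟩ := hb z ⟨x, by rw [← hz, mul_comm]⟩
  exact ⟨w, (mul_cancel_left_mem_nonZeroDivisors ha).1 (by rw [hz]; ring)⟩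

theorem mem_nonZeroDivisors {J : Ideal A} (hJ : IsHausdorff J A) (haJ : a ∈ J)
    (ha : a ∈ nonZeroDivisors A) (hb : IsRegularMod a b) : b ∈ nonZeroDivisors A := by
  refine mem_nonZeroDivisors_iff_right.2 fun x hx => hJ.eq_zero_of_forall_pow_dvd haJ fun n => ?_
  induction n generalizing x with
  | zero => rw [pow_zero]; exact one_dvd x
  | succ n ih =>
    obtain ⟨y, rfl⟩ := hb x ⟨0, by rw [mul_comm, hx, mul_zero]⟩
    have hy : y * b = 0 := (mem_nonZeroDivisors_iff.1 ha).1 _ (by rw [← hx, mul_assoc])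
    rw [pow_succ']
    exact mul_dvd_mul_left a (ih y hy)

/-- Modulo `a`, the power `b ^ N` is a unit multiple of `q`. -/
theorem of_eq_pow_add_mul {q g : A} {N : ℕ} (hq : IsRegularMod a q) (hg : IsUnit g)
    (hN : N ≠ 0) (h : a = b ^ N + q * g) : IsRegularMod a b := by
  intro x hx
  obtain ⟨M, rfl⟩ := Nat.exists_eq_add_one_of_ne_zero hN
  have hbN : a ∣ b ^ (M + 1) * x := by
    rw [pow_succ, mul_assoc]
    exact dvd_mul_of_dvd_right hx _
  have hqg : a ∣ q * (g * x) := by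
    rw [show q * (g * x) = a * x - b ^ (M + 1) * x by rw [h]; ring]
    exact dvd_sub (dvd_mul_right a x) hbN
  exact hg.dvd_mul_left.1 (hq _ hqg)

end IsRegularMod

theorem span_inf_span_le_mul {a b : A} (h : IsRegularMod b a) :
    span {a} ⊓ span {b} ≤ span {a} * span {b} := by
  rintro x ⟨hxa, hxb⟩
  rw [SetLike.mem_coe, mem_span_singleton] at hxa hxb
  obtain ⟨y, rfl⟩ := hxa
  rw [span_singleton_mul_span_singleton, mem_span_singleton]
  exact mul_dvd_mul_left a (h y hxb)

end CommRing

theorem MonoidHom.exists_comp_eq_of_injective {M R S : Type*} [MulOneClass M] [MulOneClass R]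
    [MulOneClass S] (f : R →* S) (hf : Function.Injective f) (g : M →* S)
    (hg : ∀ x, g x ∈ Set.range f) : ∃ N : M →* R, ∀ x, f (N x) = g x := by
  choose N hN using hg
  exact ⟨{ toFun := N
           map_one' := hf (by rw [hN, map_one, map_one])
           map_mul' := fun x y => hf (by rw [hN, map_mul, map_mul, hN, hN]) }, hN⟩

section FiberProduct

variable {A : Type*} [CommRing A] (K L : Ideal A)

/-- The comparison map from `A ⧸ K L` to the fibre product
`A ⧸ K ×_{A ⧸ (K + L)} A ⧸ L`. -/
def quotientMulToProd : A ⧸ (K * L) →+* (A ⧸ K) × (A ⧸ L) :=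
  (Ideal.Quotient.factor mul_le_left).prod (Ideal.Quotient.factor mul_le_right)

theorem quotientMulToProd_mk (x : A) :
    quotientMulToProd K L (mk _ x) = (mk K x, mk L x) := rfl

theorem quotientMulToProd_injective (h : K ⊓ L ≤ K * L) :
    Function.Injective (quotientMulToProd K L) := by
  refine (injective_iff_map_eq_zero _).2 fun x hx => ?_
  obtain ⟨x, rfl⟩ := mk_surjective x
  rw [quotientMulToProd_mk, Prod.mk_eq_zero, eq_zero_iff_mem, eq_zero_iff_mem] at hx
  exact eq_zero_iff_mem.2 (h hx)

theorem exists_quotientMulToProd_mk_eq {a b : A} (h : a - b ∈ K ⊔ L) :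
    ∃ c, quotientMulToProd K L (mk _ c) = (mk K a, mk L b) := by
  obtain ⟨k, hk, l, hl, hkl⟩ := Submodule.mem_sup.1 h
  refine ⟨a - k, Prod.ext (Ideal.Quotient.eq.2 ?_) (Ideal.Quotient.eq.2 ?_)⟩
  · simpa using neg_mem hk
  · rwa [show a - k - b = l by linear_combination -hkl]

theorem exists_monoidHom_quotient_mul (n : ℕ) (φ : A →+* A) (hφ : K.map φ ≤ L)
    (hinf : K ⊓ L ≤ K * L) (hcompat : ∀ x, x ^ n - φ x ∈ K ⊔ L) :
    ∃ N : A ⧸ K →* A ⧸ (K * L),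
      ∀ a, ∃ b, mk (K * L) b = N (mk K a) ∧ b - a ^ n ∈ K ∧ b - φ a ∈ L := by
  let g : A ⧸ K →* (A ⧸ K) × (A ⧸ L) :=
    (powMonoidHom n).prod (quotientMap L φ (map_le_iff_le_comap.1 hφ)).toMonoidHom
  have hg : ∀ a, g (mk K a) = (mk K (a ^ n), mk L (φ a)) := fun a => by simp [g]
  obtain ⟨N, hN⟩ := MonoidHom.exists_comp_eq_of_injective (quotientMulToProd K L).toMonoidHom
    (quotientMulToProd_injective K L hinf) g fun x => by
      obtain ⟨a, rfl⟩ := mk_surjective x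
      obtain ⟨c, hc⟩ := exists_quotientMulToProd_mk_eq K L (hcompat a)
      exact ⟨_, hc.trans (hg a).symm⟩
  refine ⟨N, fun a => ?_⟩
  obtain ⟨b, hb⟩ := mk_surjective (N (mk K a))
  have hNa : quotientMulToProd K L (mk _ b) = g (mk K a) := by
    rw [hb]; exact hN _
  rw [quotientMulToProd_mk, hg, Prod.mk.injEq, Ideal.Quotient.eq, Ideal.Quotient.eq] at hNa
  exact ⟨b, hb, hNa⟩

end FiberProduct

section Frobenius

variable {A : Type*} [CommRing A] (φ : A →+* A)

theorem iterHom_eq_pow (n : ℕ) : iterHom φ n = φ ^ n := by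
  induction n with
  | zero => rfl
  | succ n ih => rw [pow_succ', RingHom.mul_def, ← ih]; rfl

theorem map_iterHom_span_singleton (d : A) (n : ℕ) :
    (span {d}).map (iterHom φ n) = span {(φ ^ n) d} := by
  rw [map_span, Set.image_singleton, iterHom_eq_pow]

theorem prIdeal_span_singleton (d : A) (n : ℕ) :
    prIdeal φ (span {d}) n = span {∏ k ∈ range n, (φ ^ k) d} := by
  induction n with
  | zero => rw [prIdeal, prod_range_zero, span_singleton_one]
  | succ n ih =>
    rw [prIdeal, ih, map_iterHom_span_singleton, span_singleton_mul_span_singleton,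
      prod_range_succ]

theorem map_prIdeal_succ_le (I : Ideal A) (n : ℕ) :
    (prIdeal φ I (n + 1)).map φ ≤ I.map (iterHom φ (n + 1)) := by
  rw [iterHom, ← Ideal.map_map]
  exact map_mono mul_le_right

end Frobenius

section Prism

variable {A : Type*} [CommRing A] {p : ℕ} {φ : A →+* A} {δ : A → A} {d : A}

theorem pow_sub_apply_mem (hφ : ∀ x, φ x = x ^ p + p * δ x) {J : Ideal A} (hp : (p : A) ∈ J)
    (x : A) : x ^ p - φ x ∈ J := by
  rw [hφ, sub_add_cancel_left]
  exact neg_mem (mul_mem_right _ _ hp)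

theorem pow_succ_apply (hφ : ∀ x, φ x = x ^ p + p * δ x) (k : ℕ) (x : A) :
    (φ ^ (k + 1)) x = ((φ ^ k) x) ^ p + p * (φ ^ k) (δ x) := by
  rw [pow_succ, RingHom.coe_mul, Function.comp_apply, hφ, map_add, map_pow, map_mul, map_natCast]

theorem pow_apply_mem (hφ : ∀ x, φ x = x ^ p + p * δ x) (hp : p ≠ 0) {J : Ideal A}
    (hpJ : (p : A) ∈ J) (hdJ : d ∈ J) (k : ℕ) : (φ ^ k) d ∈ J := by
  induction k with
  | zero => exact hdJ
  | succ k ih =>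
    rw [pow_succ_apply hφ]
    exact add_mem (pow_mem_of_mem J ih p (Nat.pos_of_ne_zero hp)) (mul_mem_right _ _ hpJ)

theorem isUnit_delta_of_mem_sup_map (hφ : ∀ x, φ x = x ^ p + p * δ x) (hp : p ≠ 0)
    (hd : d ∈ (⊥ : Ideal A).jacobson) (hpd : IsRegularMod d (p : A))
    (hdist : (p : A) ∈ span {d} ⊔ (span {d}).map φ) : IsUnit (δ d) := by
  rw [map_span, Set.image_singleton, mem_span_singleton_sup] at hdist
  obtain ⟨a, b, hb, hab⟩ := hdist
  obtain ⟨c, rfl⟩ := mem_span_singleton.1 hb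
  obtain ⟨q, rfl⟩ := Nat.exists_eq_add_one_of_ne_zero hp
  obtain ⟨e, he⟩ := hpd (1 - c * δ d) ⟨a + c * d ^ q, by
    rw [hφ] at hab
    linear_combination -hab⟩
  have hunit := isUnit_add_of_mem_jacobson isUnit_one (neg_mem (mul_mem_right e _ hd))
  rw [← sub_eq_add_neg, ← he, sub_sub_cancel] at hunit
  exact isUnit_of_mul_isUnit_right hunit

theorem exists_isUnit_pow_apply_eq (hφ : ∀ x, φ x = x ^ p + p * δ x) (hδ : IsUnit (δ d))
    (hp : (p : A) ∈ (⊥ : Ideal A).jacobson) (k m : ℕ) :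
    ∃ g, IsUnit g ∧ (φ ^ (k + m + 1)) d = ((φ ^ k) d) ^ p ^ (m + 1) + p * g := by
  induction m with
  | zero => exact ⟨(φ ^ k) (δ d), hδ.map _, by rw [add_zero, pow_succ_apply hφ, pow_one]⟩
  | succ m ih =>
    obtain ⟨g, -, hg⟩ := ih
    obtain ⟨c, hc⟩ := dvd_sub_pow_of_dvd_sub
      (a := ((φ ^ k) d) ^ p ^ (m + 1) + p * g) (b := ((φ ^ k) d) ^ p ^ (m + 1))
      ⟨g, add_sub_cancel_left _ _⟩ 1
    refine ⟨(φ ^ (k + m + 1)) (δ d) + p * c,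
      isUnit_add_of_mem_jacobson (hδ.map _) (mul_mem_right _ _ hp), ?_⟩
    rw [show k + (m + 1) + 1 = k + m + 1 + 1 by ring, pow_succ_apply hφ, hg, pow_succ p (m + 1),
      pow_mul]
    linear_combination hc

theorem isRegularMod_pow_apply_natCast (hφ : ∀ x, φ x = x ^ p + p * δ x) {J : Ideal A}
    (hJ : IsHausdorff J A) (hdJ : d ∈ J) (hd : d ∈ nonZeroDivisors A)
    (hpd : IsRegularMod d (p : A)) (k : ℕ) : IsRegularMod ((φ ^ k) d) (p : A) := by
  refine IsRegularMod.symm (hpd.mem_nonZeroDivisors hJ hdJ hd) ?_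
  induction k with
  | zero => exact hpd.symm hd
  | succ k ih => exact (ih.pow p).of_dvd_sub ⟨(φ ^ k) (δ d), by rw [pow_succ_apply hφ]; ring⟩

theorem isRegularMod_pow_apply_of_lt (hφ : ∀ x, φ x = x ^ p + p * δ x) (hp : p ≠ 0)
    (hδ : IsUnit (δ d)) (hpj : (p : A) ∈ (⊥ : Ideal A).jacobson)
    (hpD : ∀ r, IsRegularMod ((φ ^ r) d) (p : A)) {k r : ℕ} (hkr : k < r) :
    IsRegularMod ((φ ^ r) d) ((φ ^ k) d) := by
  obtain ⟨m, rfl⟩ := Nat.exists_eq_add_of_lt hkr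
  obtain ⟨g, hg, hD⟩ := exists_isUnit_pow_apply_eq hφ hδ hpj k m
  exact (hpD _).of_eq_pow_add_mul hg (pow_ne_zero _ hp) hD

theorem prIdeal_inf_map_le_mul (hφ : ∀ x, φ x = x ^ p + p * δ x) (hp : p ≠ 0)
    (hδ : IsUnit (δ d)) (hpj : (p : A) ∈ (⊥ : Ideal A).jacobson)
    (hpD : ∀ r, IsRegularMod ((φ ^ r) d) (p : A)) (r : ℕ) :
    prIdeal φ (span {d}) r ⊓ (span {d}).map (iterHom φ r) ≤
      prIdeal φ (span {d}) r * (span {d}).map (iterHom φ r) := by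
  rw [prIdeal_span_singleton, map_iterHom_span_singleton]
  exact span_inf_span_le_mul (.prod fun k hk =>
    isRegularMod_pow_apply_of_lt hφ hp hδ hpj hpD (mem_range.1 hk))

theorem exists_natCast_eq_mul_prod_add_mul (hφ : ∀ x, φ x = x ^ p + p * δ x) (hp : 2 ≤ p)
    (hδ : IsUnit (δ d)) (hpj : (p : A) ∈ (⊥ : Ideal A).jacobson)
    (hdj : d ∈ (⊥ : Ideal A).jacobson) (s : ℕ) :
    ∃ a u, IsUnit u ∧
      (p : A) = a * ∏ k ∈ range (s + 1), (φ ^ k) d + u * (φ ^ (s + 1)) d := by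
  obtain ⟨q, rfl⟩ := Nat.exists_eq_add_of_le' hp
  induction s with
  | zero =>
    obtain ⟨U, hU⟩ := hδ.exists_right_inv
    refine ⟨-(U * d ^ (q + 1)), U, .of_mul_eq_one_right _ hU, ?_⟩
    rw [prod_range_one, zero_add, pow_zero, pow_one, RingHom.coe_one, id, hφ]
    linear_combination (-((q + 2 : ℕ) : A)) * hU
  | succ s ih =>
    obtain ⟨a, u, hu, h⟩ := ih
    have hW : IsUnit ((φ ^ (s + 1)) d ^ (q + 1) + u * (φ ^ (s + 1)) (δ d)) := by
      rw [add_comm]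
      exact isUnit_add_of_mem_jacobson (hu.mul (hδ.map _))
        (pow_mem_of_mem _ (pow_apply_mem hφ (by omega) hpj hdj _) _ q.succ_pos)
    obtain ⟨W, hW⟩ := hW.exists_right_inv
    refine ⟨a * (φ ^ (s + 1)) d ^ q * W, u * W, hu.mul (.of_mul_eq_one_right _ hW), ?_⟩
    have hD := pow_succ_apply hφ (s + 1) d
    rw [prod_range_succ]
    linear_combination (-((q + 2 : ℕ) : A)) * hW + W * (φ ^ (s + 1)) d ^ (q + 1) * h - W * u * hD

theorem natCast_mem_prIdeal_sup_map (hφ : ∀ x, φ x = x ^ p + p * δ x) (hp : 2 ≤ p)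
    (hδ : IsUnit (δ d)) (hpj : (p : A) ∈ (⊥ : Ideal A).jacobson)
    (hdj : d ∈ (⊥ : Ideal A).jacobson) (s : ℕ) :
    (p : A) ∈ prIdeal φ (span {d}) (s + 1) ⊔ (span {d}).map (iterHom φ (s + 1)) := by
  obtain ⟨a, u, -, h⟩ := exists_natCast_eq_mul_prod_add_mul hφ hp hδ hpj hdj s
  rw [prIdeal_span_singleton, map_iterHom_span_singleton, h]
  exact add_mem (mem_sup_left (mul_mem_left _ _ (mem_span_singleton_self _)))
    (mem_sup_right (mul_mem_left _ _ (mem_span_singleton_self _)))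

end Prism

theorem statement5_general
    (p : ℕ) (hp : p.Prime) {A : Type*} [CommRing A]
    (δ : A → A) (φ : A →+* A) (I : Ideal A) (d : A)
    (hdgen : I = Ideal.span {d}) (hdnz : d ∈ nonZeroDivisors A)
    (hφ : ∀ x : A, φ x = x ^ p + (p : A) * δ x)
    (hcomplete : IsAdicComplete (Ideal.span {(p : A)} ⊔ I) A)
    (hdist : (p : A) ∈ I ⊔ I.map φ)
    (htrans : ∀ x : A ⧸ I, (p : A ⧸ I) * x = 0 → x = 0)
    (r : ℕ) (hr : 1 ≤ r) :
    (∀ x y : A, x - y ∈ prIdeal φ I r →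
      x ^ p - y ^ p ∈ prIdeal φ I r ∧ φ x - φ y ∈ I.map (iterHom φ r)) ∧
    (∀ x : A, x ^ p - φ x ∈ prIdeal φ I r ⊔ I.map (iterHom φ r)) ∧
    ∃ N : (A ⧸ prIdeal φ I r) →* (A ⧸ prIdeal φ I (r + 1)),
      ∀ a : A, ∃ b : A,
        Ideal.Quotient.mk (prIdeal φ I (r + 1)) b = N (Ideal.Quotient.mk (prIdeal φ I r) a) ∧
        b - a ^ p ∈ prIdeal φ I r ∧ b - φ a ∈ I.map (iterHom φ r) := by
  subst hdgen
  obtain ⟨s, rfl⟩ := Nat.exists_eq_add_of_le' hr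
  have hpJ : (p : A) ∈ span {(p : A)} ⊔ span {d} := mem_sup_left (mem_span_singleton_self _)
  have hdJ : d ∈ span {(p : A)} ⊔ span {d} := mem_sup_right (mem_span_singleton_self _)
  have hjac := IsAdicComplete.le_jacobson_bot (span {(p : A)} ⊔ span {d})
  have hpd : IsRegularMod d (p : A) :=
    isRegularMod_of_quotient fun x => by simpa only [map_natCast] using htrans x
  have hδ := isUnit_delta_of_mem_sup_map hφ hp.ne_zero (hjac hdJ) hpd hdist
  have hpD := isRegularMod_pow_apply_natCast hφ hcomplete.toIsHausdorff hdJ hdnz hpd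
  have hφK := map_prIdeal_succ_le φ (span {d}) s
  have hinf := prIdeal_inf_map_le_mul hφ hp.ne_zero hδ (hjac hpJ) hpD (s + 1)
  have hcompat := pow_sub_apply_mem hφ
    (natCast_mem_prIdeal_sup_map hφ hp.two_le hδ (hjac hpJ) (hjac hdJ) s)
  refine ⟨fun x y hxy => ⟨mem_of_dvd _ (sub_dvd_pow_sub_pow x y p) hxy, ?_⟩, hcompat,
    exists_monoidHom_quotient_mul _ _ p φ hφK hinf hcompat⟩
  rw [← map_sub]
  exact hφK (mem_map_of_mem φ hxy)

/-- For a transversal prism `(A,I)` and `r ≥ 1`, the assignment `x ↦ (x^p, φ(x))` is a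
well-defined multiplicative map `A/I_r → A/I_r ×_{A/(I_r + (φ^r)(I))} A/(φ^r)(I)`, and hence
induces a multiplicative map `N_r : A/I_r → A/I_{r+1}` (via `I_{r+1} = I_r·(φ^r)(I)` and the
Cartesian square); in particular it gives a group homomorphism on unit groups. -/
theorem statement5
    (p : ℕ) (hp : p.Prime) {A : Type*} [CommRing A]
    (δ : A → A) (φ : A →+* A) (I : Ideal A) (d : A)
    (hdgen : I = Ideal.span {d}) (hdnz : d ∈ nonZeroDivisors A)
    (hφ : ∀ x : A, φ x = x ^ p + (p : A) * δ x)
    (hδ1 : δ 1 = 0)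
    (hδadd : ∀ x y : A, δ (x + y) =
      δ x + δ y - ∑ i ∈ Finset.Ioo 0 p, ((p.choose i / p : ℕ) : A) * x ^ i * y ^ (p - i))
    (hδmul : ∀ x y : A, δ (x * y) =
      x ^ p * δ y + y ^ p * δ x + (p : A) * δ x * δ y)
    (hcomplete : IsAdicComplete (Ideal.span {(p : A)} ⊔ I) A)
    (hdist : (p : A) ∈ I ⊔ I.map φ)
    (htrans : ∀ x : A ⧸ I, (p : A ⧸ I) * x = 0 → x = 0)
    (r : ℕ) (hr : 1 ≤ r) :
    (∀ x y : A, x - y ∈ prIdeal φ I r →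
      x ^ p - y ^ p ∈ prIdeal φ I r ∧ φ x - φ y ∈ I.map (iterHom φ r)) ∧
    (∀ x : A, x ^ p - φ x ∈ prIdeal φ I r ⊔ I.map (iterHom φ r)) ∧
    ∃ N : (A ⧸ prIdeal φ I r) →* (A ⧸ prIdeal φ I (r + 1)),
      ∀ a : A, ∃ b : A,
        Ideal.Quotient.mk (prIdeal φ I (r + 1)) b = N (Ideal.Quotient.mk (prIdeal φ I r) a) ∧
        b - a ^ p ∈ prIdeal φ I r ∧ b - φ a ∈ I.map (iterHom φ r) :=
  statement5_general p hp δ φ I d hdgen hdnz hφ hcomplete hdist htrans r hr
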